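/- arXiv:1604.07490 — 5 statements merged into one kernel-verified Lean document; each statement's English description precedes it below -/
import Mathlib

section
/- Let u ∈ ℂ satisfy u² + u + 1 = 0, and let a = [[1,1],[0,1]] and b = [[1,0],[-u,1]] be elements of SL(2,ℂ). Then a·b⁻¹·a⁻¹·b·a = b·a·b⁻¹·a⁻¹·b in SL(2,ℂ); that is, the assignment preserves the defining relation of the figure-eight knot group. -/
open Matrix

theorem figure_eight_relation_SL2 (u : ℂ) (hu : u ^ 2 + u + 1 = 0)
    (a b : Matrix.SpecialLinearGroup (Fin 2) ℂ)
    (ha : (a : Matrix (Fin 2) (Fin 2) ℂ) = !![1, 1; 0, 1])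
    (hb : (b : Matrix (Fin 2) (Fin 2) ℂ) = !![1, 0; -u, 1]) :
    a * b⁻¹ * a⁻¹ * b * a = b * a * b⁻¹ * a⁻¹ * b := by
  ext i j
  simp only [Matrix.SpecialLinearGroup.coe_mul, Matrix.SpecialLinearGroup.coe_inv, ha, hb,
    Matrix.adjugate_fin_two]
  fin_cases i <;> fin_cases j <;>
    simp [Matrix.mul_apply, Fin.sum_univ_two] <;>
    first
      | ring1
      | linear_combination (u + 1) * hu
      | linear_combination (-u) * hu
      | linear_combination (-1 : ℂ) * hu
      | linear_combination (-(u + 1)) * hu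
      | linear_combination (u + 2) * hu
      | linear_combination u * hu
      | linear_combination (1 : ℂ) * hu
end

section
/- Let u ∈ ℂ satisfy u² + u + 1 = 0. There exists a group homomorphism ρ from the presented group ⟨a, b | a b⁻¹ a⁻¹ b a · (b a b⁻¹ a⁻¹ b)⁻¹⟩ (the figure-eight knot group) to SL(2,ℂ) with ρ(a) = [[1,1],[0,1]] and ρ(b) = [[1,0],[-u,1]]. -/
/-! The meridians go to the parabolic matrices `A = [[1, 1], [0, 1]]` and `B = [[1, 0], [-u, 1]]`.
Multiplying out, `A B⁻¹ A⁻¹ B A` and `B A B⁻¹ A⁻¹ B` differ only off the diagonal, by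
`u² + u + 1` and `u (u² + u + 1)`, so the relation holds exactly when `u` is a root of the Riley
polynomial `u² + u + 1` of the figure-eight knot. -/

open Matrix

theorem PresentedGroup.lift_eq_one_of_mem_singleton_mul_inv {α G : Type*} [Group G]
    {f : α → G} {w v : FreeGroup α} (h : FreeGroup.lift f w = FreeGroup.lift f v) :
    ∀ r ∈ ({w * v⁻¹} : Set (FreeGroup α)), FreeGroup.lift f r = 1 := by
  rintro r rfl
  rw [map_mul, map_inv, h, mul_inv_cancel]

namespace Riley

variable {R : Type*} [CommRing R]

def upperUnipotent (R : Type*) [CommRing R] : SpecialLinearGroup (Fin 2) R :=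
  ⟨!![1, 1; 0, 1], by simp [det_fin_two_of]⟩

def lowerUnipotent (u : R) : SpecialLinearGroup (Fin 2) R :=
  ⟨!![1, 0; -u, 1], by simp [det_fin_two_of]⟩

@[simp]
theorem coe_upperUnipotent :
    (upperUnipotent R : Matrix (Fin 2) (Fin 2) R) = !![1, 1; 0, 1] :=
  rfl

@[simp]
theorem coe_lowerUnipotent (u : R) :
    (lowerUnipotent u : Matrix (Fin 2) (Fin 2) R) = !![1, 0; -u, 1] :=
  rfl

@[simp]
theorem coe_upperUnipotent_inv :
    (↑(upperUnipotent R)⁻¹ : Matrix (Fin 2) (Fin 2) R) = !![1, -1; 0, 1] := by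
  simp [adjugate_fin_two]

@[simp]
theorem coe_lowerUnipotent_inv (u : R) :
    (↑(lowerUnipotent u)⁻¹ : Matrix (Fin 2) (Fin 2) R) = !![1, 0; u, 1] := by
  simp [adjugate_fin_two]

theorem coe_figureEight_lhs (u : R) :
    (↑(upperUnipotent R * (lowerUnipotent u)⁻¹ * (upperUnipotent R)⁻¹ * lowerUnipotent u *
        upperUnipotent R) : Matrix (Fin 2) (Fin 2) R) =
      !![1 + u + u ^ 2, 1 + u ^ 2; u ^ 2, 1 - u + u ^ 2] := by
  simp only [Matrix.SpecialLinearGroup.coe_mul, coe_upperUnipotent, coe_lowerUnipotent,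
    coe_upperUnipotent_inv, coe_lowerUnipotent_inv, mul_fin_two]
  congrm !![?_, ?_; ?_, ?_] <;> ring

theorem coe_figureEight_rhs (u : R) :
    (↑(lowerUnipotent u * upperUnipotent R * (lowerUnipotent u)⁻¹ * (upperUnipotent R)⁻¹ *
        lowerUnipotent u) : Matrix (Fin 2) (Fin 2) R) =
      !![1 + u + u ^ 2, -u; -u - u ^ 3, 1 - u + u ^ 2] := by
  simp only [Matrix.SpecialLinearGroup.coe_mul, coe_upperUnipotent, coe_lowerUnipotent,
    coe_upperUnipotent_inv, coe_lowerUnipotent_inv, mul_fin_two]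
  congrm !![?_, ?_; ?_, ?_] <;> ring

theorem figureEight_relation_iff (u : R) :
    upperUnipotent R * (lowerUnipotent u)⁻¹ * (upperUnipotent R)⁻¹ * lowerUnipotent u *
        upperUnipotent R =
      lowerUnipotent u * upperUnipotent R * (lowerUnipotent u)⁻¹ * (upperUnipotent R)⁻¹ *
        lowerUnipotent u ↔
      u ^ 2 + u + 1 = 0 := by
  rw [Matrix.SpecialLinearGroup.ext_iff]
  simp only [Fin.forall_fin_two, coe_figureEight_lhs, coe_figureEight_rhs, of_apply,
    cons_val_zero, cons_val_one, cons_val_fin_one, true_and, and_true]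
  constructor
  · rintro ⟨h, -⟩
    linear_combination h
  · intro hu
    exact ⟨by linear_combination hu, by linear_combination u * hu⟩

end Riley

open FreeGroup in
theorem figure_eight_group_rep_exists (u : ℂ) (hu : u ^ 2 + u + 1 = 0) :
    ∃ ρ : PresentedGroup
        ({of 0 * (of 1)⁻¹ * (of 0)⁻¹ * of 1 * of 0 *
          (of 1 * of 0 * (of 1)⁻¹ * (of 0)⁻¹ * of 1)⁻¹} : Set (FreeGroup (Fin 2))) →*
        Matrix.SpecialLinearGroup (Fin 2) ℂ,
      ((ρ (PresentedGroup.of 0) : Matrix (Fin 2) (Fin 2) ℂ) = !![1, 1; 0, 1]) ∧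
      ((ρ (PresentedGroup.of 1) : Matrix (Fin 2) (Fin 2) ℂ) = !![1, 0; -u, 1]) := by
  let f : Fin 2 → Matrix.SpecialLinearGroup (Fin 2) ℂ :=
    ![Riley.upperUnipotent ℂ, Riley.lowerUnipotent u]
  have hrel := PresentedGroup.lift_eq_one_of_mem_singleton_mul_inv (f := f)
    (w := of 0 * (of 1)⁻¹ * (of 0)⁻¹ * of 1 * of 0)
    (v := of 1 * of 0 * (of 1)⁻¹ * (of 0)⁻¹ * of 1)
    (by simpa [f] using (Riley.figureEight_relation_iff u).mpr hu)
  exact ⟨PresentedGroup.toGroup hrel, by simp [f], by simp [f]⟩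
end

section
/- Let u = (−1 + i√3)/2 ∈ ℂ, and let A = [[1,0],[−1,1]], B = [[1,u],[0,1]] in SL(2,ℂ). Then for every t ∈ ℂ with t ≠ 0: (i) det(t·B − I) = (t−1)², and (ii) det(I − t⁻¹·A·B⁻¹·A⁻¹ + A·B⁻¹·A⁻¹·B − t·B + B·A·B⁻¹·A⁻¹) = (1/t²)·(t−1)²·(t²−4t+1). Consequently the twisted Alexander invariant Δ_{K,ρ₂}(t), given as the quotient of (ii) by (i), equals (1/t²)(t²−4t+1). -/
open Matrix

noncomputable def u41 : ℂ := (-1 + Complex.I * Real.sqrt 3) / 2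

noncomputable def A2 : Matrix (Fin 2) (Fin 2) ℂ := !![1, 0; -1, 1]

noncomputable def B2 : Matrix (Fin 2) (Fin 2) ℂ := !![1, u41; 0, 1]

/-- Wada's numerator `det Φ(∂r/∂a)` for the figure-eight knot in dimension 2. -/
noncomputable def num2 (t : ℂ) : ℂ :=
  det ((1 : Matrix (Fin 2) (Fin 2) ℂ) - t⁻¹ • (A2 * B2⁻¹ * A2⁻¹) +
    A2 * B2⁻¹ * A2⁻¹ * B2 - t • B2 + B2 * A2 * B2⁻¹ * A2⁻¹)

/-- Wada's denominator `det(Φ(b) − I)` for the figure-eight knot in dimension 2. -/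
noncomputable def den2 (t : ℂ) : ℂ := det (t • B2 - 1)


/-! `A2` and `B2` are unitriangular, so their inverses just negate the off-diagonal entry and
`det (t • B2 - 1) = (t - 1) ^ 2`. Expanding the numerator for an arbitrary `u` gives
`(t - 1) ^ 2 (t ^ 2 - 4 t + 1) / t ^ 2 + (u ^ 4 + u ^ 2 + 1)`, and
`u ^ 4 + u ^ 2 + 1 = (u ^ 2 + u + 1) (u ^ 2 - u + 1)` vanishes since `u41` is a primitive cube
root of unity. -/

section Unitriangular

variable {R : Type*} [CommRing R]

theorem inv_unitriangular_upper (x : R) :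
    (!![1, x; 0, 1] : Matrix (Fin 2) (Fin 2) R)⁻¹ = !![1, -x; 0, 1] := by
  simp [inv_def, det_fin_two_of, adjugate_fin_two_of]

theorem inv_unitriangular_lower (x : R) :
    (!![1, 0; x, 1] : Matrix (Fin 2) (Fin 2) R)⁻¹ = !![1, 0; -x, 1] := by
  simp [inv_def, det_fin_two_of, adjugate_fin_two_of]

theorem det_smul_unitriangular_upper_sub_one (t x : R) :
    det (t • !![1, x; 0, 1] - 1 : Matrix (Fin 2) (Fin 2) R) = (t - 1) ^ 2 := by
  rw [one_fin_two]
  simp only [smul_of, smul_cons, smul_eq_mul, smul_empty, of_sub_of, cons_sub_cons,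
    empty_sub_empty, det_fin_two_of]
  ring

end Unitriangular

theorem u41_sq_add_u41_add_one : u41 ^ 2 + u41 + 1 = 0 := by
  have h3 : (Real.sqrt 3 : ℂ) ^ 2 = 3 := by
    norm_cast
    exact Real.sq_sqrt (by norm_num)
  unfold u41
  linear_combination ((Real.sqrt 3 : ℂ) ^ 2 / 4) * Complex.I_sq - (1 / 4 : ℂ) * h3

theorem A2_inv : A2⁻¹ = !![1, 0; 1, 1] := by
  rw [A2]
  simpa using inv_unitriangular_lower (-1 : ℂ)

theorem B2_inv : B2⁻¹ = !![1, -u41; 0, 1] :=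
  inv_unitriangular_upper u41

theorem den2_eq (t : ℂ) : den2 t = (t - 1) ^ 2 :=
  det_smul_unitriangular_upper_sub_one t u41

theorem A2_mul_B2_inv_mul_A2_inv :
    A2 * B2⁻¹ * A2⁻¹ = !![1 - u41, -u41; u41, 1 + u41] := by
  rw [A2_inv, B2_inv, A2]
  simp only [mul_fin_two]
  ring_nf

theorem A2_mul_B2_inv_mul_A2_inv_mul_B2 :
    A2 * B2⁻¹ * A2⁻¹ * B2 = !![1 - u41, -u41 ^ 2; u41, u41 ^ 2 + u41 + 1] := by
  rw [A2_mul_B2_inv_mul_A2_inv, B2]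
  simp only [mul_fin_two]
  ring_nf

theorem B2_mul_A2_mul_B2_inv_mul_A2_inv :
    B2 * A2 * B2⁻¹ * A2⁻¹ = !![1 - u41 + u41 ^ 2, u41 ^ 2; u41, 1 + u41] := by
  rw [A2_inv, B2_inv, A2, B2]
  simp only [mul_fin_two]
  ring_nf

theorem num2_eq {t : ℂ} (ht : t ≠ 0) :
    num2 t = (1 / t ^ 2) * (t - 1) ^ 2 * (t ^ 2 - 4 * t + 1) := by
  rw [num2, A2_mul_B2_inv_mul_A2_inv_mul_B2, B2_mul_A2_mul_B2_inv_mul_A2_inv,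
    A2_mul_B2_inv_mul_A2_inv, B2, one_fin_two, smul_of, smul_of]
  simp only [smul_cons, smul_empty, smul_eq_mul, of_add_of, of_sub_of, cons_add_cons,
    cons_sub_cons, empty_add_empty, empty_sub_empty, det_fin_two_of]
  field_simp
  linear_combination t ^ 2 * (u41 ^ 2 - u41 + 1) * u41_sq_add_u41_add_one

theorem twisted_alexander_rho2 :
    (∀ t : ℂ, t ≠ 0 → den2 t = (t - 1) ^ 2) ∧
    (∀ t : ℂ, t ≠ 0 →
      num2 t = (1 / t ^ 2) * (t - 1) ^ 2 * (t ^ 2 - 4 * t + 1)) ∧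
    (∀ t : ℂ, t ≠ 0 → t ≠ 1 →
      num2 t / den2 t = (1 / t ^ 2) * (t ^ 2 - 4 * t + 1)) := by
  refine ⟨fun t _ => den2_eq t, fun t ht => num2_eq ht, fun t ht ht1 => ?_⟩
  rw [num2_eq ht, den2_eq t]
  field_simp [sub_ne_zero.mpr ht1]
end

section
/- Let u = (−1 + i√3)/2 ∈ ℂ, and let A₃ = [[1,0,0],[−2,1,0],[1,−1,1]], B₃ = [[1,u,u²],[0,1,2u],[0,0,1]] in SL(3,ℂ). Then for every t ∈ ℂ with t ≠ 0 and t ≠ 1, det(I − t⁻¹·A₃·B₃⁻¹·A₃⁻¹ + A₃·B₃⁻¹·A₃⁻¹·B₃ − t·B₃ + B₃·A₃·B₃⁻¹·A₃⁻¹) divided by det(t·B₃ − I) equals −(1/t³)·(t−1)·(t²−5t+1). That is, the twisted Alexander invariant Δ_{K,ρ₃}(t) = −(1/t³)(t−1)(t²−5t+1). -/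
/-!
The denominator is easy: `B₃` is unipotent upper triangular, so `det (t B₃ - 1) = (t - 1)³`.
For the numerator, write `B₃ A₃ B₃⁻¹ A₃⁻¹ = B₃ X` with `X = A₃ B₃⁻¹ A₃⁻¹`; with `A₃⁻¹`, `B₃⁻¹` and `X`
explicit, clearing `t³` turns the claim into a polynomial identity in `t` and `u`, which holds
modulo `u² + u + 1`, the minimal polynomial of the primitive cube root of unity `u`.
-/

open Matrix

noncomputable def A3 : Matrix (Fin 3) (Fin 3) ℂ := !![1, 0, 0; -2, 1, 0; 1, -1, 1]

noncomputable def B3 : Matrix (Fin 3) (Fin 3) ℂ :=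
  !![1, u41, u41 ^ 2; 0, 1, 2 * u41; 0, 0, 1]

theorem Matrix.det_smul_sub_one_of_isUpperTriangular {n R : Type*} [Fintype n] [LinearOrder n]
    [CommRing R] {M : Matrix n n R} (hM : M.IsUpperTriangular) (hdiag : ∀ i, M i i = 1)
    (t : R) : det (t • M - 1) = (t - 1) ^ Fintype.card n := by
  have hsmul : (t • M).IsUpperTriangular := fun i j hij => by rw [smul_apply, hM hij, smul_zero]
  rw [det_of_isUpperTriangular (hsmul.sub blockTriangular_one)]
  simp [hdiag]

theorem A3_inv : A3⁻¹ = !![1, 0, 0; 2, 1, 0; 1, 1, 1] := by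
  refine inv_eq_right_inv ?_
  simp only [A3, mul_fin_three, one_fin_three]
  norm_num

theorem B3_inv : B3⁻¹ = !![1, -u41, u41 ^ 2; 0, 1, -2 * u41; 0, 0, 1] := by
  refine inv_eq_right_inv ?_
  simp only [B3, mul_fin_three, one_fin_three]
  congr 1
  ring_nf

theorem A3_mul_B3_inv_mul_A3_inv :
    A3 * B3⁻¹ * A3⁻¹ = !![(1 - u41) ^ 2, u41 ^ 2 - u41, u41 ^ 2;
      2 * u41 - 2 * u41 ^ 2, 1 - 2 * u41 ^ 2, -2 * u41 - 2 * u41 ^ 2;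
      u41 ^ 2, u41 + u41 ^ 2, (1 + u41) ^ 2] := by
  rw [A3_inv, B3_inv]
  simp only [A3, mul_fin_three]
  congr 1
  ring_nf

theorem B3_isUpperTriangular : B3.IsUpperTriangular := by
  intro i j hij
  fin_cases i <;> fin_cases j <;> simp_all [B3]

theorem det_smul_B3_sub_one (t : ℂ) : det (t • B3 - 1) = (t - 1) ^ 3 := by
  simpa using det_smul_sub_one_of_isUpperTriangular B3_isUpperTriangular
    (fun i => by fin_cases i <;> simp [B3]) t

theorem det_foxDerivative_A3_B3 (t : ℂ) (ht : t ≠ 0) :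
    det ((1 : Matrix (Fin 3) (Fin 3) ℂ) - t⁻¹ • (A3 * B3⁻¹ * A3⁻¹) +
        A3 * B3⁻¹ * A3⁻¹ * B3 - t • B3 + B3 * A3 * B3⁻¹ * A3⁻¹) =
      -(t - 1) ^ 4 * (t ^ 2 - 5 * t + 1) / t ^ 3 := by
  rw [show B3 * A3 * B3⁻¹ * A3⁻¹ = B3 * (A3 * B3⁻¹ * A3⁻¹) by simp only [mul_assoc],
    A3_mul_B3_inv_mul_A3_inv, eq_div_iff (pow_ne_zero 3 ht)]
  simp only [B3, mul_fin_three, one_fin_three, det_fin_three, of_apply, cons_val', cons_val_zero,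
    cons_val_one, cons_val_two, head_cons, tail_cons, empty_val', cons_val_fin_one, head_fin_const,
    Matrix.sub_apply, Matrix.add_apply, Matrix.smul_apply, smul_eq_mul]
  field_simp
  -- the coefficient is the exact quotient of the difference of the two sides by `u² + u + 1`
  linear_combination ((t ^ 2 + t ^ 4) * (-3 + 3 * u41 - 4 * u41 ^ 2 + u41 ^ 3 - u41 ^ 5 + u41 ^ 6) +
    t ^ 3 * (7 - 7 * u41 + 12 * u41 ^ 2 - 5 * u41 ^ 3 + 8 * u41 ^ 4 - 3 * u41 ^ 5 + 3 * u41 ^ 6)) *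
    u41_sq_add_u41_add_one

theorem twisted_alexander_rho3 :
    ∀ t : ℂ, t ≠ 0 → t ≠ 1 →
      det ((1 : Matrix (Fin 3) (Fin 3) ℂ) - t⁻¹ • (A3 * B3⁻¹ * A3⁻¹) +
          A3 * B3⁻¹ * A3⁻¹ * B3 - t • B3 + B3 * A3 * B3⁻¹ * A3⁻¹) /
        det (t • B3 - 1) =
      -(1 / t ^ 3) * (t - 1) * (t ^ 2 - 5 * t + 1) := by
  intro t ht ht1
  have hsub : t - 1 ≠ 0 := sub_ne_zero.mpr ht1
  rw [det_foxDerivative_A3_B3 t ht, det_smul_B3_sub_one]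
  field_simp
end

section
/- Let u = (−1 + i√3)/2 ∈ ℂ, and let A₄ = [[1,0,0,0],[−3,1,0,0],[3,−2,1,0],[−1,1,−1,1]], B₄ = [[1,u,u²,u³],[0,1,2u,3u²],[0,0,1,3u],[0,0,0,1]] in SL(4,ℂ). Then for every t ∈ ℂ with t ≠ 0 and t ≠ 1, det(I − t⁻¹·A₄·B₄⁻¹·A₄⁻¹ + A₄·B₄⁻¹·A₄⁻¹·B₄ − t·B₄ + B₄·A₄·B₄⁻¹·A₄⁻¹) divided by det(t·B₄ − I) equals (1/t⁴)·(t²−4t+1)². That is, the twisted Alexander invariant Δ_{K,ρ₄}(t) = (1/t⁴)(t²−4t+1)². -/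
/-!
Both meridian images are symmetric cubes of unipotent matrices, so they lie in the one-parameter
groups `symCubeLower` and `symCubeUpper`, and inverting them only negates the parameter. Since `u`
is a primitive cube root of unity, every word in the relator's Fox derivative has entries of the
form `a + b u` with integers `a, b`, and the numerator becomes a polynomial identity in `t` modulo
`u ^ 2 + u + 1`. The denominator is `(t - 1) ^ 4` because `t B₄ - 1` is upper triangular.
-/

open Matrix

noncomputable def A4 : Matrix (Fin 4) (Fin 4) ℂ :=
  !![1, 0, 0, 0; -3, 1, 0, 0; 3, -2, 1, 0; -1, 1, -1, 1]

noncomputable def B4 : Matrix (Fin 4) (Fin 4) ℂ :=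
  !![1, u41, u41 ^ 2, u41 ^ 3; 0, 1, 2 * u41, 3 * u41 ^ 2; 0, 0, 1, 3 * u41; 0, 0, 0, 1]

section SymmetricCube

variable {R : Type*} [CommRing R]

theorem det_fin_four (M : Matrix (Fin 4) (Fin 4) R) :
    M.det =
      M 0 0 * (M 1 1 * M 2 2 * M 3 3 - M 1 1 * M 2 3 * M 3 2 - M 1 2 * M 2 1 * M 3 3
        + M 1 2 * M 2 3 * M 3 1 + M 1 3 * M 2 1 * M 3 2 - M 1 3 * M 2 2 * M 3 1)
      - M 0 1 * (M 1 0 * M 2 2 * M 3 3 - M 1 0 * M 2 3 * M 3 2 - M 1 2 * M 2 0 * M 3 3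
        + M 1 2 * M 2 3 * M 3 0 + M 1 3 * M 2 0 * M 3 2 - M 1 3 * M 2 2 * M 3 0)
      + M 0 2 * (M 1 0 * M 2 1 * M 3 3 - M 1 0 * M 2 3 * M 3 1 - M 1 1 * M 2 0 * M 3 3
        + M 1 1 * M 2 3 * M 3 0 + M 1 3 * M 2 0 * M 3 1 - M 1 3 * M 2 1 * M 3 0)
      - M 0 3 * (M 1 0 * M 2 1 * M 3 2 - M 1 0 * M 2 2 * M 3 1 - M 1 1 * M 2 0 * M 3 2
        + M 1 1 * M 2 2 * M 3 0 + M 1 2 * M 2 0 * M 3 1 - M 1 2 * M 2 1 * M 3 0) := by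
  rw [det_succ_row_zero]
  simp only [Fin.sum_univ_succ, Finset.univ_unique, Finset.sum_singleton, det_fin_three,
    submatrix_apply, Fin.succAbove, Fin.succ_zero_eq_one, Fin.succ_one_eq_two, Fin.castSucc_zero,
    Fin.castSucc_one, Fin.reduceSucc, Fin.reduceCastSucc, Fin.reduceLT, Fin.lt_one_iff,
    Fin.succ_pos, Fin.reduceEq, lt_self_iff_false, not_lt_zero, ↓reduceIte, Fin.default_eq_zero,
    Fin.val_zero, Fin.val_succ, Fin.val_eq_zero, pow_zero, pow_one, one_mul, zero_add, Fin.isValue]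
  ring

/-- The image of `!![1, x; 0, 1]` under the symmetric cube representation `σ₄` of `SL(2)`, in the
basis `X³, X²Y, XY², Y³`; `symCubeLower y` is the image of `!![1, 0; y, 1]`. -/
def symCubeUpper (x : R) : Matrix (Fin 4) (Fin 4) R :=
  !![1, x, x ^ 2, x ^ 3; 0, 1, 2 * x, 3 * x ^ 2; 0, 0, 1, 3 * x; 0, 0, 0, 1]

def symCubeLower (y : R) : Matrix (Fin 4) (Fin 4) R :=
  !![1, 0, 0, 0; 3 * y, 1, 0, 0; 3 * y ^ 2, 2 * y, 1, 0; y ^ 3, y ^ 2, y, 1]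

theorem symCubeUpper_add (x y : R) : symCubeUpper (x + y) = symCubeUpper x * symCubeUpper y := by
  ext i j
  fin_cases i <;> fin_cases j <;>
    simp only [symCubeUpper, mul_apply, Fin.sum_univ_four, of_apply, cons_val', cons_val,
      cons_val_zero, cons_val_one, cons_val_fin_one, Fin.zero_eta, Fin.mk_one, Fin.reduceFinMk] <;>
    ring

theorem symCubeLower_add (x y : R) : symCubeLower (x + y) = symCubeLower x * symCubeLower y := by
  ext i j
  fin_cases i <;> fin_cases j <;>
    simp only [symCubeLower, mul_apply, Fin.sum_univ_four, of_apply, cons_val', cons_val,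
      cons_val_zero, cons_val_one, cons_val_fin_one, Fin.zero_eta, Fin.mk_one, Fin.reduceFinMk] <;>
    ring

theorem symCubeUpper_zero : symCubeUpper (0 : R) = 1 := by
  ext i j
  fin_cases i <;> fin_cases j <;> simp [symCubeUpper]

theorem symCubeLower_zero : symCubeLower (0 : R) = 1 := by
  ext i j
  fin_cases i <;> fin_cases j <;> simp [symCubeLower]

theorem inv_symCubeUpper (x : R) : (symCubeUpper x)⁻¹ = symCubeUpper (-x) :=
  inv_eq_right_inv (by rw [← symCubeUpper_add, add_neg_cancel, symCubeUpper_zero])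

theorem inv_symCubeLower (y : R) : (symCubeLower y)⁻¹ = symCubeLower (-y) :=
  inv_eq_right_inv (by rw [← symCubeLower_add, add_neg_cancel, symCubeLower_zero])

theorem det_smul_symCubeUpper_sub_one (t x : R) : det (t • symCubeUpper x - 1) = (t - 1) ^ 4 := by
  rw [det_of_isUpperTriangular]
  · simp only [symCubeUpper, Fin.prod_univ_four, smul_of, smul_cons, smul_eq_mul, smul_empty,
      Matrix.sub_apply, one_apply_eq, of_apply, cons_val', cons_val, cons_val_zero, cons_val_one,
      cons_val_fin_one, Fin.isValue]
    ring
  · intro i j hij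
    fin_cases i <;> fin_cases j <;> simp_all [symCubeUpper]

end SymmetricCube

/-! For a primitive cube root of unity `u`, `symCubeLower (-1)` and `symCubeUpper u` are the images
under `ρ₄` of the meridians `a` and `b`, and the lemmas below evaluate `ρ₄` on the words
`a b⁻¹ a⁻¹`, `a b⁻¹ a⁻¹ b` and `b a b⁻¹ a⁻¹` of `∂r/∂a`. -/

namespace FigureEight

variable {R : Type*} [CommRing R] {u : R}

theorem conj_eq (hu : u ^ 2 + u + 1 = 0) :
    symCubeLower (-1) * symCubeUpper (-u) * symCubeLower 1 =
      !![-3 - 6 * u, -3 - 3 * u, -2 - u, -1; 9 + 9 * u, 7 + 2 * u, 3 - 2 * u, -3 * u;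
        -6 - 3 * u, -3 + 2 * u, 1 + 4 * u, 3 + 3 * u; 1, -u, -1 - u, -1] := by
  ext i j
  fin_cases i <;> fin_cases j <;>
    simp only [symCubeUpper, symCubeLower, mul_apply, Fin.sum_univ_four, of_apply, cons_val',
      cons_val, cons_val_zero, cons_val_one, cons_val_fin_one, Fin.zero_eta, Fin.mk_one,
      Fin.reduceFinMk] <;>
    grind

theorem conj_mul_eq (hu : u ^ 2 + u + 1 = 0) :
    symCubeLower (-1) * symCubeUpper (-u) * symCubeLower 1 * symCubeUpper u =
      !![-3 - 6 * u, 3, 1 + 2 * u, -1; 9 + 9 * u, -2 + 2 * u, -1 - u, 0; -6 - 3 * u, -u, 0, 0;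
        1, 0, 0, 0] := by
  rw [conj_eq hu]
  ext i j
  fin_cases i <;> fin_cases j <;>
    simp only [symCubeUpper, mul_apply, Fin.sum_univ_four, of_apply, cons_val', cons_val,
      cons_val_zero, cons_val_one, cons_val_fin_one, Fin.zero_eta, Fin.mk_one, Fin.reduceFinMk] <;>
    grind

theorem commutator_eq (hu : u ^ 2 + u + 1 = 0) :
    symCubeUpper u * symCubeLower (-1) * symCubeUpper (-u) * symCubeLower 1 =
      !![-8, 4 * u, 2 + 2 * u, 1; 12, -8 * u, -5 - 5 * u, -3; -6, 5 * u, 4 + 4 * u, 3;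
        1, -u, -1 - u, -1] := by
  rw [mul_assoc, mul_assoc, ← mul_assoc (symCubeLower (-1)), conj_eq hu]
  ext i j
  fin_cases i <;> fin_cases j <;>
    simp only [symCubeUpper, mul_apply, Fin.sum_univ_four, of_apply, cons_val', cons_val,
      cons_val_zero, cons_val_one, cons_val_fin_one, Fin.zero_eta, Fin.mk_one, Fin.reduceFinMk] <;>
    grind

theorem det_foxDerivative {K : Type*} [Field K] {u t : K} (hu : u ^ 2 + u + 1 = 0) (ht : t ≠ 0) :
    det (1 - t⁻¹ • (symCubeLower (-1) * symCubeUpper (-u) * symCubeLower 1)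
      + symCubeLower (-1) * symCubeUpper (-u) * symCubeLower 1 * symCubeUpper u
      - t • symCubeUpper u
      + symCubeUpper u * symCubeLower (-1) * symCubeUpper (-u) * symCubeLower 1) =
    (t ^ 2 - 4 * t + 1) ^ 2 * (t - 1) ^ 4 / t ^ 4 := by
  rw [conj_mul_eq hu, commutator_eq hu, conj_eq hu, det_fin_four]
  simp only [symCubeUpper, smul_of, smul_cons, smul_eq_mul, smul_empty, Matrix.add_apply,
    Matrix.sub_apply, one_apply_eq, one_apply_ne, of_apply, cons_val', cons_val, cons_val_zero,
    cons_val_one, cons_val_fin_one, ne_eq, Fin.reduceEq, not_false_eq_true]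
  field_simp
  grind

end FigureEight

theorem A4_eq_symCubeLower : A4 = symCubeLower (-1) := by
  ext i j
  fin_cases i <;> fin_cases j <;> norm_num [A4, symCubeLower]

theorem B4_eq_symCubeUpper : B4 = symCubeUpper u41 := rfl

theorem twisted_alexander_rho4 :
    ∀ t : ℂ, t ≠ 0 → t ≠ 1 →
      det ((1 : Matrix (Fin 4) (Fin 4) ℂ) - t⁻¹ • (A4 * B4⁻¹ * A4⁻¹) +
          A4 * B4⁻¹ * A4⁻¹ * B4 - t • B4 + B4 * A4 * B4⁻¹ * A4⁻¹) /
        det (t • B4 - 1) =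
      (1 / t ^ 4) * (t ^ 2 - 4 * t + 1) ^ 2 := by
  intro t ht ht1
  rw [A4_eq_symCubeLower, B4_eq_symCubeUpper, inv_symCubeUpper, inv_symCubeLower, neg_neg,
    FigureEight.det_foxDerivative u41_sq_add_u41_add_one ht, det_smul_symCubeUpper_sub_one]
  field_simp [sub_ne_zero.mpr ht1]
end
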